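/- Let A, B, C be three non-collinear points in the Euclidean plane, with incenter I and excenters E_A, E_B, E_C. Let X, Y be two distinct vertices among A, B, C, and write E_X, E_Y for the corresponding excenters. Then the unsigned angle ∠ I E_Y E_X (at vertex E_Y) equals the unsigned angle ∠ I X Y (at vertex X), which is half of the interior angle of the triangle at X. In particular ∠ I E_B E_A = ∠ I A B and ∠ I E_C E_A = ∠ I A C, and these two are equal. -/

import Mathlib

/-!
Put `e = Y - X`, `f = Z - X` and let `a, b, c` be the side lengths opposite `X, Y, Z`. Every point
involved is then an explicit combination of `e` and `f`: `I - X` is a positive multiple of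
`b • e + c • f = ‖f‖ • e + ‖e‖ • f`, the bisector of `e` and `f`, while `I - E_Y` and `E_X - E_Y`
are positive multiples of `(a + c) • e - c • f` and `b • e + (a - b) • f`. The half-angle claim is
the rhombus property of the bisector, and the equality of the two angles is a comparison of
cosines that becomes a polynomial identity in `a, b, c` once `⟪e, f⟫` is expressed by the law of
cosines.
-/

open EuclideanGeometry

/-- The incenter of the triangle `A B C`. -/
noncomputable def incenterPt (A B C : EuclideanSpace ℝ (Fin 2)) : EuclideanSpace ℝ (Fin 2) :=
  (dist B C + dist C A + dist A B)⁻¹ •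
    (dist B C • A + dist C A • B + dist A B • C)

/-- The excenter of the triangle `A B C` opposite the first vertex `A`. -/
noncomputable def excenterPt (A B C : EuclideanSpace ℝ (Fin 2)) : EuclideanSpace ℝ (Fin 2) :=
  (-dist B C + dist C A + dist A B)⁻¹ •
    ((-dist B C) • A + dist C A • B + dist A B • C)

namespace InnerProductGeometry

open scoped RealInnerProductSpace

variable {V : Type*} [NormedAddCommGroup V] [InnerProductSpace ℝ V]

theorem angle_add_eq_angle_div_two_of_norm_eq {u v : V} (huv : ‖u‖ = ‖v‖) (hv : v ≠ 0) :
    angle u (u + v) = angle u v / 2 := by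
  have hsymm : angle v (u + v) = angle u (u + v) := by
    have := angle_sub_eq_angle_sub_rev_of_norm_eq (x := u) (y := -v) (by rw [norm_neg, huv])
    rw [sub_neg_eq_add, show -v - u = -(u + v) by abel, angle_neg_neg] at this
    exact this.symm
  linarith [angle_eq_angle_add_add_angle_add u hv]

theorem angle_norm_smul_add_norm_smul_eq_angle_div_two {x y : V} (hx : x ≠ 0) (hy : y ≠ 0) :
    angle (‖y‖ • x + ‖x‖ • y) x = angle x y / 2 := by
  have hxn : 0 < ‖x‖ := norm_pos_iff.2 hx
  have hyn : 0 < ‖y‖ := norm_pos_iff.2 hy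
  have h := angle_add_eq_angle_div_two_of_norm_eq (u := ‖y‖ • x) (v := ‖x‖ • y)
    (by simp only [norm_smul, Real.norm_of_nonneg hxn.le, Real.norm_of_nonneg hyn.le, mul_comm])
    (smul_ne_zero hxn.ne' hy)
  rw [angle_smul_left_of_pos _ _ hyn, angle_smul_left_of_pos _ _ hyn,
    angle_smul_right_of_pos _ _ hxn] at h
  rw [angle_comm, h]

theorem angle_eq_angle_of_inner_sq_mul_eq {x y x' y' : V} (h : 0 < ⟪x, y⟫) (h' : 0 < ⟪x', y'⟫)
    (hsq : ⟪x, y⟫ ^ 2 * (‖x'‖ ^ 2 * ‖y'‖ ^ 2) = ⟪x', y'⟫ ^ 2 * (‖x‖ ^ 2 * ‖y‖ ^ 2)) :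
    angle x y = angle x' y' := by
  have hn : 0 < ‖x‖ * ‖y‖ := lt_of_lt_of_le h (real_inner_le_norm x y)
  have hn' : 0 < ‖x'‖ * ‖y'‖ := lt_of_lt_of_le h' (real_inner_le_norm x' y')
  unfold angle
  congr 1
  rw [← pow_left_inj₀ (by positivity) (by positivity) two_ne_zero, div_pow, div_pow,
    div_eq_div_iff (by positivity) (by positivity)]
  linear_combination hsq

theorem inner_smul_add_smul_smul_add_smul (e f : V) (α β γ δ : ℝ) :
    ⟪α • e + β • f, γ • e + δ • f⟫ =
      α * γ * ⟪e, e⟫ + (α * δ + β * γ) * ⟪e, f⟫ + β * δ * ⟪f, f⟫ := by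
  simp only [inner_add_left, inner_add_right, real_inner_smul_left, real_inner_smul_right,
    real_inner_comm e f]
  ring

theorem angle_excentral_directions_eq_angle_bisector {e f : V} {a b c : ℝ} (hc : ‖e‖ = c)
    (hb : ‖f‖ = b) (ha : ‖e - f‖ = a) (hab : c < a + b) (hbc : a < b + c) (hca : b < c + a) :
    angle ((a + c) • e + (-c) • f) (b • e + (a - b) • f) = angle (b • e + c • f) e := by
  have hee : ⟪e, e⟫ = c ^ 2 := by rw [real_inner_self_eq_norm_sq, hc]
  have hff : ⟪f, f⟫ = b ^ 2 := by rw [real_inner_self_eq_norm_sq, hb]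
  have hef : ⟪e, f⟫ = (b ^ 2 + c ^ 2 - a ^ 2) / 2 := by
    rw [← hc, ← hb, ← ha, norm_sub_sq_real]; ring
  have hpq : ⟪(a + c) • e + (-c) • f, b • e + (a - b) • f⟫ =
      a * (a - b + c) * ((-a + b + c) * (a + b + c)) / 2 := by
    rw [inner_smul_add_smul_smul_add_smul, hee, hff, hef]; ring
  have hwe : ⟪b • e + c • f, e⟫ = c * ((-a + b + c) * (a + b + c)) / 2 := by
    rw [inner_add_left, real_inner_smul_left, real_inner_smul_left, real_inner_comm e f, hee, hef]
    ring
  have ha0 : 0 < a := by linarith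
  have hc0 : 0 < c := by linarith
  have hb0 : 0 < b := by linarith
  have hq : 0 < a - b + c := by linarith
  have hp : 0 < -a + b + c := by linarith
  apply angle_eq_angle_of_inner_sq_mul_eq
  · rw [hpq]; positivity
  · rw [hwe]; positivity
  · simp only [← real_inner_self_eq_norm_sq, inner_smul_add_smul_smul_add_smul, hpq, hwe, hee,
      hff, hef]
    ring

end InnerProductGeometry

theorem incenterPt_rotate (A B C : EuclideanSpace ℝ (Fin 2)) :
    incenterPt B C A = incenterPt A B C := by
  simp only [incenterPt]
  rw [show dist C A + dist A B + dist B C = dist B C + dist C A + dist A B by ring]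
  congr 1
  module

theorem incenterPt_swap_right (A B C : EuclideanSpace ℝ (Fin 2)) :
    incenterPt A C B = incenterPt A B C := by
  simp only [incenterPt, dist_comm C B, dist_comm B A, dist_comm A C]
  rw [show dist B C + dist A B + dist C A = dist B C + dist C A + dist A B by ring]
  congr 1
  module

theorem excenterPt_swap_right (A B C : EuclideanSpace ℝ (Fin 2)) :
    excenterPt A C B = excenterPt A B C := by
  simp only [excenterPt, dist_comm C B, dist_comm B A, dist_comm A C]
  rw [show -dist B C + dist A B + dist C A = -dist B C + dist C A + dist A B by ring]
  congr 1
  module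

theorem dist_lt_dist_add_dist_of_not_collinear {V P : Type*} [NormedAddCommGroup V]
    [NormedSpace ℝ V] [StrictConvexSpace ℝ V] [MetricSpace P] [NormedAddTorsor V P]
    {p₁ p₂ p₃ : P}
    (h : ¬ Collinear ℝ {p₁, p₂, p₃}) : dist p₁ p₃ < dist p₁ p₂ + dist p₂ p₃ :=
  dist_lt_dist_add_dist_iff.2 fun hw => h hw.collinear

section Triangle

variable {X Y Z : EuclideanSpace ℝ (Fin 2)} {a b c : ℝ}

theorem incenterPt_sub_left (ha : dist Y Z = a) (hb : dist Z X = b) (hc : dist X Y = c)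
    (hs : a + b + c ≠ 0) :
    incenterPt X Y Z - X = (a + b + c)⁻¹ • (b • (Y - X) + c • (Z - X)) := by
  simp only [incenterPt, ha, hb, hc]
  match_scalars <;> field_simp
  ring

theorem incenterPt_sub_excenterPt (ha : dist Y Z = a) (hb : dist Z X = b) (hc : dist X Y = c)
    (hs : a + b + c ≠ 0) (hq : a - b + c ≠ 0) :
    incenterPt X Y Z - excenterPt Y Z X =
      (2 * b / ((a + b + c) * (a - b + c))) • ((a + c) • (Y - X) + (-c) • (Z - X)) := by
  simp only [incenterPt, excenterPt, ha, hb, hc]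
  rw [show -b + c + a = a - b + c by ring]
  match_scalars <;> field_simp <;> ring

theorem excenterPt_sub_excenterPt (ha : dist Y Z = a) (hb : dist Z X = b) (hc : dist X Y = c)
    (hp : -a + b + c ≠ 0) (hq : a - b + c ≠ 0) :
    excenterPt X Y Z - excenterPt Y Z X =
      (2 * c / ((-a + b + c) * (a - b + c))) • (b • (Y - X) + (a - b) • (Z - X)) := by
  simp only [excenterPt, ha, hb, hc]
  rw [show -b + c + a = a - b + c by ring]
  match_scalars <;> field_simp <;> ring

theorem angle_incenterPt_eq_angle_div_two (hXY : X ≠ Y) (hXZ : X ≠ Z) :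
    ∠ (incenterPt X Y Z) X Y = ∠ Y X Z / 2 := by
  have hc : 0 < dist X Y := dist_pos.2 hXY
  have hb : 0 < dist Z X := dist_pos.2 hXZ.symm
  rw [angle, vsub_eq_sub, vsub_eq_sub, incenterPt_sub_left rfl rfl rfl (by positivity),
    InnerProductGeometry.angle_smul_left_of_pos _ _ (by positivity), dist_eq_norm, dist_comm,
    dist_eq_norm]
  exact InnerProductGeometry.angle_norm_smul_add_norm_smul_eq_angle_div_two
    (sub_ne_zero.2 hXY.symm) (sub_ne_zero.2 hXZ.symm)

theorem angle_incenterPt_excenterPt_excenterPt (h : ¬ Collinear ℝ {X, Y, Z}) :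
    ∠ (incenterPt X Y Z) (excenterPt Y Z X) (excenterPt X Y Z) = ∠ (incenterPt X Y Z) X Y := by
  have hXZY : ¬ Collinear ℝ {X, Z, Y} := by rwa [Set.pair_comm Z Y]
  have hYXZ : ¬ Collinear ℝ {Y, X, Z} := by rwa [Set.insert_comm Y X]
  have hab : dist X Y < dist Y Z + dist Z X := by
    linarith [dist_lt_dist_add_dist_of_not_collinear hXZY, dist_comm X Z, dist_comm Z Y]
  have hbc : dist Y Z < dist Z X + dist X Y := by
    linarith [dist_lt_dist_add_dist_of_not_collinear hYXZ, dist_comm X Z, dist_comm Y X]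
  have hca : dist Z X < dist X Y + dist Y Z := by
    linarith [dist_lt_dist_add_dist_of_not_collinear h, dist_comm X Z]
  rw [angle, angle, vsub_eq_sub, vsub_eq_sub, vsub_eq_sub, vsub_eq_sub,
    incenterPt_sub_excenterPt rfl rfl rfl (by linarith) (by linarith),
    excenterPt_sub_excenterPt rfl rfl rfl (by linarith) (by linarith),
    incenterPt_sub_left rfl rfl rfl (by linarith),
    InnerProductGeometry.angle_smul_left_of_pos _ _ (div_pos (by linarith) (by nlinarith)),
    InnerProductGeometry.angle_smul_right_of_pos _ _ (div_pos (by linarith) (by nlinarith)),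
    InnerProductGeometry.angle_smul_left_of_pos _ _ (inv_pos.2 (by linarith))]
  exact InnerProductGeometry.angle_excentral_directions_eq_angle_bisector
    (by rw [← dist_eq_norm, dist_comm]) (by rw [← dist_eq_norm])
    (by rw [sub_sub_sub_cancel_right, ← dist_eq_norm]) hab hbc hca

theorem angle_incenterPt_excenterPt_of_not_collinear (h : ¬ Collinear ℝ {X, Y, Z}) :
    (∠ (incenterPt X Y Z) (excenterPt Y Z X) (excenterPt X Y Z) = ∠ (incenterPt X Y Z) X Y ∧
      ∠ (incenterPt X Y Z) X Y = ∠ Y X Z / 2) ∧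
    (∠ (incenterPt X Y Z) (excenterPt Z X Y) (excenterPt X Y Z) = ∠ (incenterPt X Y Z) X Z ∧
      ∠ (incenterPt X Y Z) X Z = ∠ Y X Z / 2) := by
  have hXZY : ¬ Collinear ℝ {X, Z, Y} := by rwa [Set.pair_comm Z Y]
  have hXY : X ≠ Y := ne₁₂_of_not_collinear h
  have hXZ : X ≠ Z := ne₁₃_of_not_collinear h
  have hY := angle_incenterPt_excenterPt_excenterPt hXZY
  rw [incenterPt_swap_right, excenterPt_swap_right Z, excenterPt_swap_right X] at hY
  refine ⟨⟨angle_incenterPt_excenterPt_excenterPt h, angle_incenterPt_eq_angle_div_two hXY hXZ⟩,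
    hY, ?_⟩
  rw [← incenterPt_swap_right, angle_incenterPt_eq_angle_div_two hXZ hXY, angle_comm]

end Triangle

/-- For any two distinct vertices `X, Y` among `A, B, C` with corresponding excenters
`E_X, E_Y`, the unsigned angle `∠ I E_Y E_X` equals `∠ I X Y`, which is half the
interior angle of the triangle at `X`.  Stated for all six ordered pairs of distinct
vertices, with `I` the incenter, `E_A = excenterPt A B C`, `E_B = excenterPt B C A`,
`E_C = excenterPt C A B`. -/
theorem angle_incenter_excenter (A B C : EuclideanSpace ℝ (Fin 2))
    (h : AffineIndependent ℝ ![A, B, C])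
    (I : EuclideanSpace ℝ (Fin 2)) (hI : I = incenterPt A B C)
    (EA : EuclideanSpace ℝ (Fin 2)) (hEA : EA = excenterPt A B C)
    (EB : EuclideanSpace ℝ (Fin 2)) (hEB : EB = excenterPt B C A)
    (EC : EuclideanSpace ℝ (Fin 2)) (hEC : EC = excenterPt C A B) :
    (∠ I EB EA = ∠ I A B ∧ ∠ I A B = ∠ B A C / 2) ∧
    (∠ I EC EA = ∠ I A C ∧ ∠ I A C = ∠ B A C / 2) ∧
    (∠ I EA EB = ∠ I B A ∧ ∠ I B A = ∠ A B C / 2) ∧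
    (∠ I EC EB = ∠ I B C ∧ ∠ I B C = ∠ A B C / 2) ∧
    (∠ I EA EC = ∠ I C A ∧ ∠ I C A = ∠ A C B / 2) ∧
    (∠ I EB EC = ∠ I C B ∧ ∠ I C B = ∠ A C B / 2) := by
  subst hI hEA hEB hEC
  have hABC := affineIndependent_iff_not_collinear_set.mp h
  have hBCA : ¬ Collinear ℝ ({B, C, A} : Set (EuclideanSpace ℝ (Fin 2))) := by
    rwa [Set.pair_comm C A, Set.insert_comm B A]
  have hCAB : ¬ Collinear ℝ ({C, A, B} : Set (EuclideanSpace ℝ (Fin 2))) := by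
    rwa [Set.insert_comm C A, Set.pair_comm C B]
  obtain ⟨hAB, hAC⟩ := angle_incenterPt_excenterPt_of_not_collinear hABC
  obtain ⟨hBC, hBA⟩ := angle_incenterPt_excenterPt_of_not_collinear hBCA
  obtain ⟨hCA, hCB⟩ := angle_incenterPt_excenterPt_of_not_collinear hCAB
  rw [incenterPt_rotate, angle_comm C B A] at hBC hBA
  rw [incenterPt_rotate, incenterPt_rotate] at hCA hCB
  exact ⟨hAB, hAC, hBA, hBC, hCA, hCB⟩
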